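/- Let G : ℝ² → ℝ be the Gaussian G(ξ) = (1/4π) e^{−|ξ|²/4}, and let H : ℝ² → ℝ be continuously differentiable with vanishing Poisson bracket with G, i.e. {H, G}(ξ) = ∂₁H(ξ) ∂₂G(ξ) − ∂₂H(ξ) ∂₁G(ξ) = 0 for every ξ ∈ ℝ². Then H is radially symmetric and factors through G: there exists a function F : ℝ → ℝ such that H(ξ) = F(G(ξ)) for all ξ ∈ ℝ². -/

import Mathlib

/-!
Since `∇G(ξ) = -(G(ξ)/2) ξ` and `G` never vanishes, `{H, G}(ξ)` is a nonzero multiple of the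
derivative of `H` along the rotation field `ξ ↦ iξ`. So `H` is constant along every circle
`θ ↦ r e^{iθ}`, i.e. `H(ξ) = H(|ξ|)`. As `G` is an injective function of `|ξ|`, `G a = G b`
forces `|a| = |b|`, hence `H a = H b`, which is exactly factorisation through `G`.
-/

open Real

theorem hasFDerivAt_const_mul_exp_neg_norm_sq_div_four {E : Type*} [NormedAddCommGroup E]
    [InnerProductSpace ℝ E] (c : ℝ) (x : E) :
    HasFDerivAt (fun y : E => c * exp (-‖y‖ ^ 2 / 4))
      ((-(c * exp (-‖x‖ ^ 2 / 4)) / 2) • innerSL ℝ x) x := by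
  have hprofile : HasDerivAt (fun t : ℝ => c * exp (-t / 4))
      (c * (exp (-‖x‖ ^ 2 / 4) * (-1 / 4))) (‖x‖ ^ 2) :=
    (((hasDerivAt_id _).neg.div_const 4).exp).const_mul c
  refine (hprofile.comp_hasFDerivAt x (hasStrictFDerivAt_norm_sq x).hasFDerivAt).congr_fderiv ?_
  ext y
  simp only [smul_apply, coe_innerSL_apply, nsmul_eq_mul, Nat.cast_ofNat, smul_eq_mul]
  ring

theorem Complex.map_mul_I {M F : Type*} [AddCommGroup M] [Module ℝ M] [FunLike F ℂ M]
    [LinearMapClass F ℝ ℂ M] (L : F) (z : ℂ) :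
    L (z * Complex.I) = z.re • L Complex.I - z.im • L 1 := by
  have hz : z * Complex.I = (-z.im) • (1 : ℂ) + z.re • Complex.I := by
    simp [Complex.ext_iff]
  rw [hz, map_add, map_smul, map_smul, neg_smul]
  abel

theorem poissonBracket_smul_innerSL_eq_neg_mul_apply_mul_I (L : ℂ →L[ℝ] ℝ) (g : ℝ) (ξ : ℂ) :
    L 1 * (g • innerSL ℝ ξ) Complex.I - L Complex.I * (g • innerSL ℝ ξ) 1
      = -g * L (ξ * Complex.I) := by
  rw [Complex.map_mul_I]
  simp only [smul_apply, coe_innerSL_apply, Complex.inner, Complex.mul_re,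
    Complex.I_re, Complex.I_im, Complex.conj_re, Complex.conj_im, Complex.one_re, Complex.one_im,
    smul_eq_mul]
  ring

theorem apply_eq_apply_norm_of_fderiv_apply_mul_I_eq_zero {F : Type*} [NormedAddCommGroup F]
    [NormedSpace ℝ F] {f : ℂ → F} (hf : Differentiable ℝ f)
    (hrot : ∀ z, fderiv ℝ f z (z * Complex.I) = 0) (z : ℂ) : f z = f ‖z‖ := by
  set circle : ℝ → ℂ := fun θ => ‖z‖ * Complex.exp (θ * Complex.I)
  have hcircle : ∀ θ, HasDerivAt circle (circle θ * Complex.I) θ := fun θ => by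
    have h := ((Complex.hasDerivAt_exp _).comp θ
      ((Complex.ofRealCLM.hasDerivAt (x := θ)).mul_const Complex.I)).const_mul (‖z‖ : ℂ)
    simpa [circle, mul_assoc] using h
  have hderiv : ∀ θ, HasDerivAt (f ∘ circle) 0 θ := fun θ => by
    simpa [hrot] using (hf (circle θ)).hasFDerivAt.comp_hasDerivAt θ (hcircle θ)
  have hconst := is_const_of_deriv_eq_zero (fun θ => (hderiv θ).differentiableAt)
    (fun θ => (hderiv θ).deriv) z.arg 0
  simpa [circle, Complex.norm_mul_exp_arg_mul_I] using hconst

theorem norm_eq_of_const_mul_exp_neg_norm_sq_div_four_eq {E : Type*} [SeminormedAddCommGroup E]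
    {c : ℝ} (hc : c ≠ 0) {x y : E}
    (h : c * exp (-‖x‖ ^ 2 / 4) = c * exp (-‖y‖ ^ 2 / 4)) : ‖x‖ = ‖y‖ := by
  have hsq : ‖x‖ ^ 2 = ‖y‖ ^ 2 := by
    have := exp_injective (mul_left_cancel₀ hc h)
    linarith
  exact (pow_left_inj₀ (norm_nonneg x) (norm_nonneg y) two_ne_zero).1 hsq

theorem factors_through_gaussian_of_poisson_bracket_vanishes
    (H : ℂ → ℝ) (hH : ContDiff ℝ 1 H)
    (G : ℂ → ℝ) (hG : ∀ ξ : ℂ, G ξ = (1 / (4 * π)) * Real.exp (-‖ξ‖ ^ 2 / 4))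
    (hpb : ∀ ξ : ℂ,
      fderiv ℝ H ξ 1 * fderiv ℝ G ξ Complex.I
        - fderiv ℝ H ξ Complex.I * fderiv ℝ G ξ 1 = 0) :
    ∃ F : ℝ → ℝ, ∀ ξ : ℂ, H ξ = F (G ξ) := by
  have hc : 1 / (4 * π) ≠ 0 := by positivity
  have hGd : ∀ ξ, fderiv ℝ G ξ = (-G ξ / 2) • innerSL ℝ ξ := fun ξ => by
    rw [hG, funext hG]
    exact (hasFDerivAt_const_mul_exp_neg_norm_sq_div_four _ ξ).fderiv
  have hrot : ∀ ξ, fderiv ℝ H ξ (ξ * Complex.I) = 0 := fun ξ => by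
    have hGξ : G ξ ≠ 0 := by rw [hG]; positivity
    have h := hpb ξ
    rw [hGd, poissonBracket_smul_innerSL_eq_neg_mul_apply_mul_I] at h
    simpa [hGξ] using h
  have hradial :=
    apply_eq_apply_norm_of_fderiv_apply_mul_I_eq_zero (hH.differentiable one_ne_zero) hrot
  obtain ⟨F, hF⟩ := (Function.factorsThrough_iff (f := G) H).1 fun a b hab => by
    rw [hG, hG] at hab
    rw [hradial a, hradial b, norm_eq_of_const_mul_exp_neg_norm_sq_div_four_eq hc hab]
  exact ⟨F, congrFun hF⟩
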